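/- Let b ∈ ℂ and let T be the 2×2 complex matrix with rows (1, b) and (0, −1), acting on ℓ_p². Then V_p(T) = { z ∈ ℂ : there exists θ ∈ [0, 2π] with |z − cos 2θ| = |b|·(sin²θ)^{1/p}·(cos²θ)^{1/q} }; that is, V_p(T) is the union over θ ∈ [0, 2π] of the circles C(θ) centered at the real point cos 2θ with radius R(θ) = |b|·(sin²θ)^{1/p}·(cos²θ)^{1/q}. -/

import Mathlib

open Complex Real

/-- The `ℓ_p` norm on `ℂ²`. -/
noncomputable def lpNorm (p : ℝ) (x : Fin 2 → ℂ) : ℝ :=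
  (∑ k, ‖x k‖ ^ p) ^ (1 / p)

/-- The numerical range of a `2 × 2` complex matrix acting on `ℓ_p²`.
Note that when `x k = 0` the corresponding term vanishes since `conj (x k) = 0`. -/
noncomputable def numRange (p : ℝ) (T : Matrix (Fin 2) (Fin 2) ℂ) : Set ℂ :=
  { z | ∃ x : Fin 2 → ℂ, lpNorm p x = 1 ∧
      z = ∑ k, T.mulVec x k * (starRingEnd ℂ) (x k) * ((‖x k‖ ^ (p - 2) : ℝ) : ℂ) }

/-- The numerical radius of a `2 × 2` complex matrix acting on `ℓ_p²`. -/
noncomputable def numRadius (p : ℝ) (T : Matrix (Fin 2) (Fin 2) ℂ) : ℝ :=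
  sSup ((fun z : ℂ => ‖z‖) '' numRange p T)

/-! With `r = ‖x 0‖`, `s = ‖x 1‖` and `r ^ p + s ^ p = 1`, the functional equals
`(r ^ p - s ^ p) + b * x 1 * conj (x 0) * r ^ (p - 2)`: a point at distance `‖b‖ * s * r ^ (p - 1)`
from `r ^ p - s ^ p`, in the direction given by the free phase of `x 1`. Putting `u = r ^ p = cos² θ`
turns the center into `cos 2θ` and the radius into `‖b‖ (sin² θ) ^ (1 / p) (cos² θ) ^ (1 / q)`. -/

namespace Real

lemma mul_rpow_sub_two {r p : ℝ} (hr : 0 ≤ r) (hp : p ≠ 1) : r * r ^ (p - 2) = r ^ (p - 1) := by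
  rw [← rpow_one_add' hr (by contrapose! hp; linarith)]
  ring_nf

lemma sq_mul_rpow_sub_two {r p : ℝ} (hr : 0 ≤ r) (hp : p ≠ 0) : r ^ 2 * r ^ (p - 2) = r ^ p := by
  rw [← rpow_two, ← rpow_add' hr (by simpa using hp)]
  ring_nf

lemma rpow_rpow_div {r p c : ℝ} (hr : 0 ≤ r) (hp : p ≠ 0) : (r ^ p) ^ (c / p) = r ^ c := by
  rw [← rpow_mul hr, mul_div_cancel₀ c hp]

lemma image_cos_sq_Icc : (fun θ => cos θ ^ 2) '' Set.Icc 0 (2 * π) = Set.Icc 0 1 := by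
  refine subset_antisymm ?_ fun u ⟨hu0, hu1⟩ => ?_
  · rintro _ ⟨θ, -, rfl⟩
    exact ⟨sq_nonneg _, cos_sq_le_one θ⟩
  · have hsqrt : cos (arccos √u) = √u := cos_arccos (by linarith [sqrt_nonneg u]) (sqrt_le_one.2 hu1)
    refine ⟨arccos √u, ⟨arccos_nonneg _, ?_⟩, by simp only [hsqrt, sq_sqrt hu0]⟩
    linarith [arccos_le_pi √u, pi_pos]

end Real

lemma exists_norm_eq_one_mul_eq {𝕜 : Type*} [NormedField 𝕜] {a c : 𝕜} (h : ‖a‖ = ‖c‖) :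
    ∃ w : 𝕜, ‖w‖ = 1 ∧ c * w = a := by
  rcases eq_or_ne c 0 with rfl | hc
  · exact ⟨1, norm_one, by rw [zero_mul, eq_comm, ← norm_eq_zero, h, norm_zero]⟩
  · exact ⟨a / c, by rw [norm_div, h, div_self (norm_ne_zero_iff.2 hc)], mul_div_cancel₀ a hc⟩

open ComplexConjugate

namespace Complex

variable {p : ℝ}

lemma mul_conj_mul_norm_rpow_sub_two (x : ℂ) (hp : p ≠ 0) :
    x * conj x * ((‖x‖ ^ (p - 2) : ℝ) : ℂ) = ((‖x‖ ^ p : ℝ) : ℂ) := by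
  rw [mul_conj, normSq_eq_norm_sq, ← Real.sq_mul_rpow_sub_two (norm_nonneg x) hp]
  push_cast
  ring

lemma norm_conj_mul_norm_rpow_sub_two (x : ℂ) (hp : p ≠ 1) :
    ‖conj x * ((‖x‖ ^ (p - 2) : ℝ) : ℂ)‖ = ‖x‖ ^ (p - 1) := by
  rw [norm_mul, norm_conj, norm_real, Real.norm_of_nonneg (by positivity),
    Real.mul_rpow_sub_two (norm_nonneg x) hp]

lemma conj_ofReal_mul_norm_rpow_sub_two {r : ℝ} (hr : 0 ≤ r) (hp : p ≠ 1) :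
    conj (r : ℂ) * ((‖(r : ℂ)‖ ^ (p - 2) : ℝ) : ℂ) = ((r ^ (p - 1) : ℝ) : ℂ) := by
  rw [conj_ofReal, norm_real, Real.norm_of_nonneg hr, ← Real.mul_rpow_sub_two hr hp, ofReal_mul]

end Complex

open Complex

section

variable {p : ℝ}

lemma lpNorm_eq_one_iff (hp : p ≠ 0) (x : Fin 2 → ℂ) :
    lpNorm p x = 1 ↔ ‖x 0‖ ^ p + ‖x 1‖ ^ p = 1 := by
  rw [lpNorm, Fin.sum_univ_two]
  simpa only [Real.one_rpow] using
    Real.rpow_left_inj (by positivity) zero_le_one (one_div_ne_zero hp)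

lemma sum_mulVec_conj_norm_rpow (hp : p ≠ 0) (b : ℂ) (x : Fin 2 → ℂ) :
    ∑ k, (!![1, b; 0, -1] : Matrix (Fin 2) (Fin 2) ℂ).mulVec x k * conj (x k) *
        ((‖x k‖ ^ (p - 2) : ℝ) : ℂ) =
      ((‖x 0‖ ^ p - ‖x 1‖ ^ p : ℝ) : ℂ) + b * x 1 * (conj (x 0) * ((‖x 0‖ ^ (p - 2) : ℝ) : ℂ)) := by
  have h0 := mul_conj_mul_norm_rpow_sub_two (x 0) hp
  have h1 := mul_conj_mul_norm_rpow_sub_two (x 1) hp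
  simp only [Fin.sum_univ_two, Matrix.mulVec, dotProduct, Matrix.of_apply, Matrix.cons_val',
    Matrix.cons_val_zero, Matrix.cons_val_one, Matrix.cons_val_fin_one, ofReal_sub]
  linear_combination h0 - h1

lemma exists_mem_Icc_of_mem_numRange (hp₀ : p ≠ 0) (hp₁ : p ≠ 1) {b z : ℂ}
    (hz : z ∈ numRange p !![1, b; 0, -1]) :
    ∃ u ∈ Set.Icc (0 : ℝ) 1,
      ‖z - ((2 * u - 1 : ℝ) : ℂ)‖ = ‖b‖ * (1 - u) ^ (1 / p) * u ^ ((p - 1) / p) := by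
  obtain ⟨x, hx, rfl⟩ := hz
  rw [lpNorm_eq_one_iff hp₀] at hx
  have hx1 : 1 - ‖x 0‖ ^ p = ‖x 1‖ ^ p := by linarith
  have hdiff : ∑ k, (!![1, b; 0, -1] : Matrix (Fin 2) (Fin 2) ℂ).mulVec x k * conj (x k) *
        ((‖x k‖ ^ (p - 2) : ℝ) : ℂ) - ((2 * ‖x 0‖ ^ p - 1 : ℝ) : ℂ) =
      b * x 1 * (conj (x 0) * ((‖x 0‖ ^ (p - 2) : ℝ) : ℂ)) := by
    have hxC := congrArg ((↑) : ℝ → ℂ) hx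
    rw [sum_mulVec_conj_norm_rpow hp₀]
    push_cast at hxC ⊢
    linear_combination -hxC
  refine ⟨‖x 0‖ ^ p, ⟨by positivity, by linarith [Real.rpow_nonneg (norm_nonneg (x 1)) p]⟩, ?_⟩
  rw [hdiff, hx1, Real.rpow_rpow_div (norm_nonneg _) hp₀, Real.rpow_rpow_div (norm_nonneg _) hp₀,
    Real.rpow_one, norm_mul, norm_mul, norm_conj_mul_norm_rpow_sub_two _ hp₁]

lemma mem_numRange_of_mem_Icc (hp₀ : p ≠ 0) (hp₁ : p ≠ 1) {b z : ℂ} {u : ℝ}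
    (hu : u ∈ Set.Icc (0 : ℝ) 1)
    (hz : ‖z - ((2 * u - 1 : ℝ) : ℂ)‖ = ‖b‖ * (1 - u) ^ (1 / p) * u ^ ((p - 1) / p)) :
    z ∈ numRange p !![1, b; 0, -1] := by
  set r := u ^ (1 / p)
  set s := (1 - u) ^ (1 / p)
  have hu₀ : 0 ≤ u := hu.1
  have hu₁ : 0 ≤ 1 - u := sub_nonneg.2 hu.2
  have hr : 0 ≤ r := by positivity
  have hs : 0 ≤ s := by positivity
  have hrp : r ^ p = u := by simp only [r, one_div, Real.rpow_inv_rpow hu₀ hp₀]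
  have hsp : s ^ p = 1 - u := by simp only [s, one_div, Real.rpow_inv_rpow hu₁ hp₀]
  have hur : u ^ ((p - 1) / p) = r ^ (p - 1) := by
    rw [← Real.rpow_mul hu₀, one_div_mul_eq_div]
  obtain ⟨w, hw, hbw⟩ := exists_norm_eq_one_mul_eq (a := z - ((2 * u - 1 : ℝ) : ℂ))
    (c := b * s * ((r ^ (p - 1) : ℝ) : ℂ))
    (by rw [hz, hur, norm_mul, norm_mul, norm_real, norm_real, Real.norm_of_nonneg hs,
      Real.norm_of_nonneg (by positivity)])
  refine ⟨![(r : ℂ), s * w], ?_, ?_⟩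
  · rw [lpNorm_eq_one_iff hp₀]
    simp only [Matrix.cons_val_zero, Matrix.cons_val_one, Matrix.cons_val_fin_one, norm_mul,
      norm_real, hw, mul_one, Real.norm_of_nonneg hr, Real.norm_of_nonneg hs, hrp, hsp]
    ring
  · rw [sum_mulVec_conj_norm_rpow hp₀]
    simp only [Matrix.cons_val_zero, Matrix.cons_val_one, Matrix.cons_val_fin_one]
    rw [conj_ofReal_mul_norm_rpow_sub_two hr hp₁]
    simp only [norm_mul, norm_real, hw, mul_one, Real.norm_of_nonneg hr, Real.norm_of_nonneg hs,
      hrp, hsp]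
    push_cast at hbw ⊢
    linear_combination -hbw

theorem numRange_eq_union_circles_Icc (hp₀ : p ≠ 0) (hp₁ : p ≠ 1) (b : ℂ) :
    numRange p !![1, b; 0, -1] =
      { z : ℂ | ∃ u ∈ Set.Icc (0 : ℝ) 1,
          ‖z - ((2 * u - 1 : ℝ) : ℂ)‖ = ‖b‖ * (1 - u) ^ (1 / p) * u ^ ((p - 1) / p) } :=
  Set.ext fun _ => ⟨exists_mem_Icc_of_mem_numRange hp₀ hp₁,
    fun ⟨_, hu, hz⟩ => mem_numRange_of_mem_Icc hp₀ hp₁ hu hz⟩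

end

theorem numRange_eq_union_of_circles (p q : ℝ) (hp : 1 < p) (hq : q = p / (p - 1)) (b : ℂ) :
    numRange p !![1, b; 0, -1] =
      { z : ℂ | ∃ θ ∈ Set.Icc (0 : ℝ) (2 * π),
          ‖z - Real.cos (2 * θ)‖ =
            ‖b‖ * (Real.sin θ ^ 2) ^ (1 / p) * (Real.cos θ ^ 2) ^ (1 / q) } := by
  rw [numRange_eq_union_circles_Icc (by positivity) hp.ne', hq, one_div_div, ← Real.image_cos_sq_Icc]
  ext z
  simp only [Set.exists_mem_image, Real.cos_two_mul, Real.sin_sq]
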